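/- arXiv:2502.07488 — 3 statements merged into one kernel-verified Lean document; each statement's English description precedes it below -/
import Mathlib

section
/- Consider the Adam ODE: dW/dt = -M/(√V + ε) (elementwise), dM/dt = G - M, dV/dt = G² - V, where G = ∇L(W) and ε > 0, with V having positive entries along the trajectory. Then the Hamiltonian H(W, M, V) = L(W) + (1/2)⟨M/(√V + ε), M⟩ satisfies dH/dt ≤ 0 along trajectories. -/
/-!
By the chain rule, `dH/dt = ⟨G, dW/dt⟩ + (1/2) d/dt ⟨M/(√V+ε), M⟩` splits into a sum over the
entries, and with `s = √V` each entry simplifies to `-M²(3s² + 4sε + G²) / (4s(s+ε)²) ≤ 0`.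
-/

open Matrix

attribute [local instance] Matrix.frobeniusNormedAddCommGroup Matrix.frobeniusNormedSpace

/-- Frobenius inner product of matrices. -/
def mInner {m n : ℕ} (A B : Matrix (Fin m) (Fin n) ℝ) : ℝ :=
  ∑ i, ∑ j, A i j * B i j

theorem Matrix.hasDerivAt_of_hasDerivAt_entries {𝕜 ι κ : Type*} [NontriviallyNormedField 𝕜]
    [Fintype ι] [Fintype κ] [DecidableEq ι] [DecidableEq κ]
    {f : 𝕜 → Matrix ι κ 𝕜} {f' : Matrix ι κ 𝕜} {t : 𝕜}
    (h : ∀ i j, HasDerivAt (fun s => f s i j) (f' i j) t) : HasDerivAt f f' t := by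
  have hsum : HasDerivAt (fun s => ∑ i, ∑ j, single i j (f s i j))
      (∑ i, ∑ j, single i j (f' i j)) t :=
    HasDerivAt.fun_sum fun i _ => HasDerivAt.fun_sum fun j _ => by
      simpa only [smul_single, smul_eq_mul, mul_one] using (h i j).smul_const (single i j (1 : 𝕜))
  simpa only [← matrix_eq_sum_single] using hsum

theorem hasDerivAt_adam_kinetic_entry {μ v : ℝ → ℝ} {g ε t : ℝ}
    (hμ : HasDerivAt μ (g - μ t) t) (hv : HasDerivAt v (g ^ 2 - v t) t)
    (hvpos : 0 < v t) (hε : 0 ≤ ε) :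
    HasDerivAt (fun s => μ s / (√(v s) + ε) * μ s)
      (2 * μ t * (g - μ t) / (√(v t) + ε)
        - μ t ^ 2 * (g ^ 2 - v t) / (2 * √(v t) * (√(v t) + ε) ^ 2)) t := by
  have hden : √(v t) + ε ≠ 0 := by positivity
  refine ((hμ.fun_div ((hv.sqrt hvpos.ne').add_const ε) hden).fun_mul hμ).congr_deriv ?_
  field_simp
  ring

theorem adam_entry_power_eq (g μ v ε : ℝ) (hv : 0 < v) (hε : 0 ≤ ε) :
    g * -(μ / (√v + ε)) + 1 / 2 *
      (2 * μ * (g - μ) / (√v + ε) - μ ^ 2 * (g ^ 2 - v) / (2 * √v * (√v + ε) ^ 2))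
      = -(μ ^ 2 * (3 * v + 4 * √v * ε + g ^ 2) / (4 * √v * (√v + ε) ^ 2)) := by
  obtain ⟨s, hs, rfl⟩ : ∃ s, 0 < s ∧ v = s ^ 2 := ⟨√v, Real.sqrt_pos.2 hv, (Real.sq_sqrt hv.le).symm⟩
  rw [Real.sqrt_sq hs.le]
  field_simp
  ring

theorem adam_entry_power_nonpos (g μ v ε : ℝ) (hv : 0 < v) (hε : 0 ≤ ε) :
    g * -(μ / (√v + ε)) + 1 / 2 *
      (2 * μ * (g - μ) / (√v + ε) - μ ^ 2 * (g ^ 2 - v) / (2 * √v * (√v + ε) ^ 2)) ≤ 0 := by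
  rw [adam_entry_power_eq g μ v ε hv hε, neg_nonpos]
  have : 0 < √v := Real.sqrt_pos.2 hv
  positivity

/-- Along trajectories of the Adam ODE
dW/dt = -M/(√V+ε), dM/dt = G - M, dV/dt = G² - V (elementwise, G = ∇L(W)),
with ε > 0 and V entrywise positive, the Hamiltonian
H(W,M,V) = L(W) + (1/2)⟨M/(√V+ε), M⟩ is non-increasing: dH/dt ≤ 0. -/
theorem adam_ode_hamiltonian_descent {m n : ℕ}
    (L : Matrix (Fin m) (Fin n) ℝ → ℝ)
    (G : Matrix (Fin m) (Fin n) ℝ → Matrix (Fin m) (Fin n) ℝ)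
    (l : Matrix (Fin m) (Fin n) ℝ → (Matrix (Fin m) (Fin n) ℝ →L[ℝ] ℝ))
    (hL : ∀ X, HasFDerivAt L (l X) X)
    (hl : ∀ X H, l X H = mInner (G X) H)
    (ε : ℝ) (hε : 0 < ε)
    (W M V : ℝ → Matrix (Fin m) (Fin n) ℝ)
    (hV : ∀ t i j, 0 < V t i j)
    (hW : ∀ t i j, HasDerivAt (fun s => W s i j)
      (-(M t i j / (Real.sqrt (V t i j) + ε))) t)
    (hM : ∀ t i j, HasDerivAt (fun s => M s i j) (G (W t) i j - M t i j) t)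
    (hVd : ∀ t i j, HasDerivAt (fun s => V s i j) ((G (W t) i j) ^ 2 - V t i j) t) :
    ∀ t D, HasDerivAt (fun s => L (W s) +
        (1 / 2) * mInner (Matrix.of fun i j => M s i j / (Real.sqrt (V s i j) + ε)) (M s))
        D t → D ≤ 0 := by
  intro t D hD
  have hWmat : HasDerivAt W (of fun i j => -(M t i j / (√(V t i j) + ε))) t :=
    hasDerivAt_of_hasDerivAt_entries (hW t)
  have hpotential : HasDerivAt (fun s => L (W s))
      (mInner (G (W t)) (of fun i j => -(M t i j / (√(V t i j) + ε)))) t := by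
    rw [← hl]
    exact (hL (W t)).comp_hasDerivAt t hWmat
  have hkinetic := HasDerivAt.const_mul (1 / 2 : ℝ) <| HasDerivAt.fun_sum (u := .univ) fun i _ =>
    HasDerivAt.fun_sum (u := .univ) fun j _ =>
      hasDerivAt_adam_kinetic_entry (hM t i j) (hVd t i j) (hV t i j) hε.le
  rw [hD.unique (hpotential.add hkinetic)]
  simp only [mInner, of_apply, Finset.mul_sum, ← Finset.sum_add_distrib]
  exact Finset.sum_nonpos fun i _ => Finset.sum_nonpos fun j _ =>
    adam_entry_power_nonpos _ _ _ _ (hV t i j) hε.le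
end

section
/- In the Adam ODE setting, the time derivative of the Hamiltonian satisfies dH/dt ≤ -(1/4)⟨M²/(√V ⊙ (√V + ε)²), G²⟩ ≤ 0, where ⊙ is elementwise product and G = ∇L(W). -/
/-!
Along the flow the potential `L(W)` decreases at rate `⟨G, M/(√V+ε)⟩`, which cancels the
cross term of the derivative of the kinetic energy. Entrywise, with `m, g, v` the entries of
`M, G, V` and `s = √v`, what remains is `-m²/(s+ε) - m²g²/(4s(s+ε)²) + m²s/(4(s+ε)²)`,
and the last term is dominated by the first because `s ≤ 4(s+ε)`.
-/

open Matrix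

attribute [local instance] Matrix.frobeniusNormedAddCommGroup Matrix.frobeniusNormedSpace

theorem HasFDerivAt.comp_hasDerivAt_of_entries {m n : ℕ} {L : Matrix (Fin m) (Fin n) ℝ → ℝ}
    {l : Matrix (Fin m) (Fin n) ℝ →L[ℝ] ℝ} {g W' : Matrix (Fin m) (Fin n) ℝ}
    {W : ℝ → Matrix (Fin m) (Fin n) ℝ} {t : ℝ} (hL : HasFDerivAt L l (W t))
    (hl : ∀ H, l H = mInner g H) (hW : ∀ i j, HasDerivAt (fun s => W s i j) (W' i j) t) :
    HasDerivAt (fun s => L (W s)) (mInner g W') t := by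
  rw [← hl]
  exact hL.comp_hasDerivAt t (hasDerivAt_pi.2 fun i => hasDerivAt_pi.2 fun j => hW i j)

theorem mInner_nonneg {m n : ℕ} {A B : Matrix (Fin m) (Fin n) ℝ}
    (hA : ∀ i j, 0 ≤ A i j) (hB : ∀ i j, 0 ≤ B i j) : 0 ≤ mInner A B :=
  Finset.sum_nonneg fun i _ => Finset.sum_nonneg fun j _ => mul_nonneg (hA i j) (hB i j)

theorem hasDerivAt_div_sqrt_add_mul_self {x v : ℝ → ℝ} {x' v' t ε : ℝ}
    (hx : HasDerivAt x x' t) (hv : HasDerivAt v v' t) (hvt : 0 < v t)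
    (hd : √(v t) + ε ≠ 0) :
    HasDerivAt (fun s => x s / (√(v s) + ε) * x s)
      (2 * x t * x' / (√(v t) + ε) - x t ^ 2 * v' / (2 * √(v t) * (√(v t) + ε) ^ 2)) t := by
  have hs : √(v t) ≠ 0 := (Real.sqrt_pos.2 hvt).ne'
  refine ((hx.fun_div ((hv.sqrt hvt.ne').add_const ε) hd).fun_mul hx).congr_deriv ?_
  field_simp
  ring

theorem adam_entry_descent {a g v ε : ℝ} (hv : 0 < v) (hε : 0 ≤ ε) :
    g * -(a / (√v + ε)) +
        1 / 2 * (2 * a * (g - a) / (√v + ε) - a ^ 2 * (g ^ 2 - v) / (2 * √v * (√v + ε) ^ 2)) ≤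
      -(1 / 4) * (a ^ 2 / (√v * (√v + ε) ^ 2) * g ^ 2) := by
  obtain ⟨s, hs, rfl⟩ : ∃ s, 0 < s ∧ v = s ^ 2 :=
    ⟨√v, Real.sqrt_pos.2 hv, (Real.sq_sqrt hv.le).symm⟩
  rw [Real.sqrt_sq hs.le]
  have hd : 0 < s + ε := by linarith
  have split : g * -(a / (s + ε)) +
        1 / 2 * (2 * a * (g - a) / (s + ε) - a ^ 2 * (g ^ 2 - s ^ 2) / (2 * s * (s + ε) ^ 2)) =
      -(1 / 4) * (a ^ 2 / (s * (s + ε) ^ 2) * g ^ 2) +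
        (a ^ 2 * s / (4 * (s + ε) ^ 2) - a ^ 2 / (s + ε)) := by
    field_simp
    ring
  have slack : a ^ 2 * s / (4 * (s + ε) ^ 2) ≤ a ^ 2 / (s + ε) := by
    rw [div_le_div_iff₀ (by positivity) hd]
    have : a ^ 2 * s * (s + ε) ≤ a ^ 2 * (4 * (s + ε)) * (s + ε) := by gcongr; linarith
    linarith
  linarith

/-- In the Adam ODE setting (dW/dt = -M/(√V+ε), dM/dt = G - M, dV/dt = G² - V,
G = ∇L(W), ε > 0, V entrywise positive), the time derivative of
H = L(W) + (1/2)⟨M/(√V+ε), M⟩ satisfies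
dH/dt ≤ -(1/4)⟨M²/(√V ⊙ (√V+ε)²), G²⟩ ≤ 0. -/
theorem adam_ode_hamiltonian_descent_bound {m n : ℕ}
    (L : Matrix (Fin m) (Fin n) ℝ → ℝ)
    (G : Matrix (Fin m) (Fin n) ℝ → Matrix (Fin m) (Fin n) ℝ)
    (l : Matrix (Fin m) (Fin n) ℝ → (Matrix (Fin m) (Fin n) ℝ →L[ℝ] ℝ))
    (hL : ∀ X, HasFDerivAt L (l X) X)
    (hl : ∀ X H, l X H = mInner (G X) H)
    (ε : ℝ) (hε : 0 < ε)
    (W M V : ℝ → Matrix (Fin m) (Fin n) ℝ)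
    (hV : ∀ t i j, 0 < V t i j)
    (hW : ∀ t i j, HasDerivAt (fun s => W s i j)
      (-(M t i j / (Real.sqrt (V t i j) + ε))) t)
    (hM : ∀ t i j, HasDerivAt (fun s => M s i j) (G (W t) i j - M t i j) t)
    (hVd : ∀ t i j, HasDerivAt (fun s => V s i j) ((G (W t) i j) ^ 2 - V t i j) t) :
    ∀ t D, HasDerivAt (fun s => L (W s) +
        (1 / 2) * mInner (Matrix.of fun i j => M s i j / (Real.sqrt (V s i j) + ε)) (M s))
        D t →
      D ≤ -(1 / 4) * mInner
            (Matrix.of fun i j => (M t i j) ^ 2 /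
              (Real.sqrt (V t i j) * (Real.sqrt (V t i j) + ε) ^ 2))
            (Matrix.of fun i j => (G (W t) i j) ^ 2) ∧
      -(1 / 4) * mInner
            (Matrix.of fun i j => (M t i j) ^ 2 /
              (Real.sqrt (V t i j) * (Real.sqrt (V t i j) + ε) ^ 2))
            (Matrix.of fun i j => (G (W t) i j) ^ 2) ≤ 0 := by
  intro t D hD
  have hd : ∀ i j, √(V t i j) + ε ≠ 0 := fun i j => by positivity
  have hpot := (hL (W t)).comp_hasDerivAt_of_entries (hl (W t))
    (W' := of fun i j => -(M t i j / (√(V t i j) + ε))) (hW t)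
  have hkin := HasDerivAt.fun_sum (u := Finset.univ) fun i _ =>
    HasDerivAt.fun_sum (u := Finset.univ) fun j _ =>
    hasDerivAt_div_sqrt_add_mul_self (hM t i j) (hVd t i j) (hV t i j) (hd i j)
  have hH := hpot.fun_add (hkin.const_mul (1 / 2))
  refine ⟨?_, mul_nonpos_of_nonpos_of_nonneg (by norm_num)
    (mInner_nonneg (fun i j => by rw [of_apply]; positivity) fun i j => by rw [of_apply]; positivity)⟩
  rw [hD.unique hH]
  simp only [mInner, Matrix.of_apply, Finset.mul_sum, ← Finset.sum_add_distrib]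
  exact Finset.sum_le_sum fun i _ => Finset.sum_le_sum fun j _ =>
    adam_entry_descent (hV t i j) hε.le
end

section
/- Consider the AdaDiag ODE: dW/dt = -P(t) · M/(√V + ε), dM/dt = P(t)^T G - M, dV/dt = (P(t)^T G)² - V, where G = ∇L(W), P(t) is orthogonal for each t, ε > 0, and V entrywise positive. Then H(W, M, V) = L(W) + (1/2)⟨M/(√V + ε), M⟩ satisfies dH/dt ≤ -(1/4)⟨M²/(√V ⊙ (√V+ε)²), (P(t)^T G)²⟩ ≤ 0. -/
open Matrix

attribute [local instance] Matrix.frobeniusNormedAddCommGroup Matrix.frobeniusNormedSpace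

/-!
Along the flow, the loss contributes `-⟨G, P·(M/(√V+ε))⟩ = -⟨PᵀG, M/(√V+ε)⟩` to `dH/dt`, so the
rate splits over the entries. Per entry, with `a = M`, `g = PᵀG`, `s = √V`, the rate is
`-a²/(s+ε) - a²g²/(4s(s+ε)²) + a²s/(4(s+ε)²)`, and the first term dominates the last.
-/

theorem Matrix.hasDerivAt_of_entries {𝕜 : Type*} [NontriviallyNormedField 𝕜]
    {m n : Type*} [Fintype m] [Fintype n] [DecidableEq m] [DecidableEq n]
    {f : 𝕜 → Matrix m n 𝕜} {f' : Matrix m n 𝕜} {t : 𝕜}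
    (h : ∀ i j, HasDerivAt (fun s => f s i j) (f' i j) t) : HasDerivAt f f' t := by
  have hsum (X : Matrix m n 𝕜) : X = ∑ i, ∑ j, X i j • single i j (1 : 𝕜) := by
    simpa only [smul_single, smul_eq_mul, mul_one] using matrix_eq_sum_single X
  rw [funext fun s => hsum (f s), hsum f']
  exact .fun_sum fun i _ => .fun_sum fun j _ => (h i j).smul_const _

theorem mInner_eq_trace {m n : ℕ} (A B : Matrix (Fin m) (Fin n) ℝ) :
    mInner A B = (A * Bᵀ).trace := by
  simp only [mInner, trace, diag, mul_apply, transpose_apply]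

theorem mInner_mul_right {m n : ℕ} (A : Matrix (Fin m) (Fin n) ℝ) (P : Matrix (Fin m) (Fin m) ℝ)
    (B : Matrix (Fin m) (Fin n) ℝ) : mInner A (P * B) = mInner (Pᵀ * A) B := by
  rw [mInner_eq_trace, mInner_eq_trace, transpose_mul, ← Matrix.mul_assoc, trace_mul_comm,
    Matrix.mul_assoc]

theorem HasDerivAt.div_sqrt_add_mul_self {a v : ℝ → ℝ} {a' v' ε t : ℝ}
    (ha : HasDerivAt a a' t) (hv : HasDerivAt v v' t) (hvt : 0 < v t) (hε : 0 ≤ ε) :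
    HasDerivAt (fun s => a s / (√(v s) + ε) * a s)
      (2 * a t * a' / (√(v t) + ε) - a t ^ 2 * v' / (2 * √(v t) * (√(v t) + ε) ^ 2)) t := by
  have hs : 0 < √(v t) := Real.sqrt_pos.2 hvt
  have hden : HasDerivAt (fun s => √(v s) + ε) (v' / (2 * √(v t))) t :=
    (hv.sqrt hvt.ne').add_const ε
  refine ((ha.fun_div hden (by positivity)).mul ha).congr_deriv ?_
  field_simp
  ring

theorem adadiag_entry_rate_le {a g v ε : ℝ} (hv : 0 < v) (hε : 0 ≤ ε) :
    -(g * (a / (√v + ε))) +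
        1 / 2 * (2 * a * (g - a) / (√v + ε) - a ^ 2 * (g ^ 2 - v) / (2 * √v * (√v + ε) ^ 2)) ≤
      -(1 / 4) * (a ^ 2 / (√v * (√v + ε) ^ 2) * g ^ 2) := by
  obtain ⟨s, hs, rfl⟩ : ∃ s, 0 < s ∧ v = s ^ 2 :=
    ⟨√v, Real.sqrt_pos.2 hv, (Real.sq_sqrt hv.le).symm⟩
  rw [Real.sqrt_sq hs.le, ← sub_nonneg]
  have hgap : -(1 / 4) * (a ^ 2 / (s * (s + ε) ^ 2) * g ^ 2) -
      (-(g * (a / (s + ε))) + 1 / 2 * (2 * a * (g - a) / (s + ε) -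
        a ^ 2 * (g ^ 2 - s ^ 2) / (2 * s * (s + ε) ^ 2))) =
      a ^ 2 * (3 * s + 4 * ε) / (4 * (s + ε) ^ 2) := by
    field_simp
    ring
  rw [hgap]
  positivity

theorem adadiag_ode_hamiltonian_descent_general {m n : ℕ}
    (L : Matrix (Fin m) (Fin n) ℝ → ℝ)
    (G : Matrix (Fin m) (Fin n) ℝ → Matrix (Fin m) (Fin n) ℝ)
    (l : Matrix (Fin m) (Fin n) ℝ → (Matrix (Fin m) (Fin n) ℝ →L[ℝ] ℝ))
    (hL : ∀ X, HasFDerivAt L (l X) X)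
    (hl : ∀ X H, l X H = mInner (G X) H)
    (ε : ℝ) (hε : 0 < ε)
    (P : ℝ → Matrix (Fin m) (Fin m) ℝ)
    (W M V : ℝ → Matrix (Fin m) (Fin n) ℝ)
    (hV : ∀ t i j, 0 < V t i j)
    (hW : ∀ t i j, HasDerivAt (fun s => W s i j)
      (-((P t * Matrix.of fun a b => M t a b / (Real.sqrt (V t a b) + ε)) i j)) t)
    (hM : ∀ t i j, HasDerivAt (fun s => M s i j)
      (((P t)ᵀ * G (W t)) i j - M t i j) t)
    (hVd : ∀ t i j, HasDerivAt (fun s => V s i j)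
      ((((P t)ᵀ * G (W t)) i j) ^ 2 - V t i j) t) :
    ∀ t D, HasDerivAt (fun s => L (W s) +
        (1 / 2) * mInner (Matrix.of fun i j => M s i j / (Real.sqrt (V s i j) + ε)) (M s))
        D t →
      D ≤ -(1 / 4) * mInner
            (Matrix.of fun i j => (M t i j) ^ 2 /
              (Real.sqrt (V t i j) * (Real.sqrt (V t i j) + ε) ^ 2))
            (Matrix.of fun i j => (((P t)ᵀ * G (W t)) i j) ^ 2) ∧
      -(1 / 4) * mInner
            (Matrix.of fun i j => (M t i j) ^ 2 /
              (Real.sqrt (V t i j) * (Real.sqrt (V t i j) + ε) ^ 2))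
            (Matrix.of fun i j => (((P t)ᵀ * G (W t)) i j) ^ 2) ≤ 0 := by
  intro t D hD
  set g := (P t)ᵀ * G (W t)
  set A : Matrix (Fin m) (Fin n) ℝ := of fun i j => M t i j / (√(V t i j) + ε)
  have hW' : HasDerivAt W (-(P t * A)) t := hasDerivAt_of_entries fun i j => hW t i j
  have hloss : HasDerivAt (fun s => L (W s)) (∑ i, ∑ j, -(g i j * A i j)) t := by
    refine ((hL (W t)).comp_hasDerivAt t hW').congr_deriv ((hl _ _).trans ?_)
    rw [← Matrix.mul_neg, mInner_mul_right]
    exact Finset.sum_congr rfl fun i _ => Finset.sum_congr rfl fun j _ => mul_neg _ _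
  have hkin : HasDerivAt (fun s => mInner (of fun i j => M s i j / (√(V s i j) + ε)) (M s))
      (∑ i, ∑ j, (2 * M t i j * (g i j - M t i j) / (√(V t i j) + ε) -
        M t i j ^ 2 * (g i j ^ 2 - V t i j) / (2 * √(V t i j) * (√(V t i j) + ε) ^ 2))) t :=
    .fun_sum fun i _ => .fun_sum fun j _ =>
      (hM t i j).div_sqrt_add_mul_self (hVd t i j) (hV t i j) hε.le
  refine ⟨?_, ?_⟩
  · rw [hD.unique (hloss.add (hkin.const_mul (1 / 2))), mInner, Finset.mul_sum, Finset.mul_sum,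
      ← Finset.sum_add_distrib]
    gcongr with i
    rw [Finset.mul_sum, Finset.mul_sum, ← Finset.sum_add_distrib]
    gcongr with j
    exact adadiag_entry_rate_le (hV t i j) hε.le
  · refine mul_nonpos_of_nonpos_of_nonneg (by norm_num) (mInner_nonneg ?_ ?_) <;>
      intro i j <;> simp only [of_apply] <;> positivity

/-- In the AdaDiag ODE (dW/dt = -P(t)·M/(√V+ε), dM/dt = P(t)ᵀG - M,
dV/dt = (P(t)ᵀG)² - V, G = ∇L(W), P(t) orthogonal, ε > 0, V entrywise positive),
the Hamiltonian H = L(W) + (1/2)⟨M/(√V+ε), M⟩ satisfies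
dH/dt ≤ -(1/4)⟨M²/(√V ⊙ (√V+ε)²), (P(t)ᵀG)²⟩ ≤ 0. -/
theorem adadiag_ode_hamiltonian_descent {m n : ℕ}
    (L : Matrix (Fin m) (Fin n) ℝ → ℝ)
    (G : Matrix (Fin m) (Fin n) ℝ → Matrix (Fin m) (Fin n) ℝ)
    (l : Matrix (Fin m) (Fin n) ℝ → (Matrix (Fin m) (Fin n) ℝ →L[ℝ] ℝ))
    (hL : ∀ X, HasFDerivAt L (l X) X)
    (hl : ∀ X H, l X H = mInner (G X) H)
    (ε : ℝ) (hε : 0 < ε)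
    (P : ℝ → Matrix (Fin m) (Fin m) ℝ)
    (hP : ∀ t, P t * (P t)ᵀ = 1 ∧ (P t)ᵀ * P t = 1)
    (W M V : ℝ → Matrix (Fin m) (Fin n) ℝ)
    (hV : ∀ t i j, 0 < V t i j)
    (hW : ∀ t i j, HasDerivAt (fun s => W s i j)
      (-((P t * Matrix.of fun a b => M t a b / (Real.sqrt (V t a b) + ε)) i j)) t)
    (hM : ∀ t i j, HasDerivAt (fun s => M s i j)
      (((P t)ᵀ * G (W t)) i j - M t i j) t)
    (hVd : ∀ t i j, HasDerivAt (fun s => V s i j)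
      ((((P t)ᵀ * G (W t)) i j) ^ 2 - V t i j) t) :
    ∀ t D, HasDerivAt (fun s => L (W s) +
        (1 / 2) * mInner (Matrix.of fun i j => M s i j / (Real.sqrt (V s i j) + ε)) (M s))
        D t →
      D ≤ -(1 / 4) * mInner
            (Matrix.of fun i j => (M t i j) ^ 2 /
              (Real.sqrt (V t i j) * (Real.sqrt (V t i j) + ε) ^ 2))
            (Matrix.of fun i j => (((P t)ᵀ * G (W t)) i j) ^ 2) ∧
      -(1 / 4) * mInner
            (Matrix.of fun i j => (M t i j) ^ 2 /
              (Real.sqrt (V t i j) * (Real.sqrt (V t i j) + ε) ^ 2))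
            (Matrix.of fun i j => (((P t)ᵀ * G (W t)) i j) ^ 2) ≤ 0 :=
  adadiag_ode_hamiltonian_descent_general L G l hL hl ε hε P W M V hV hW hM hVd
end
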